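/- Let R be a commutative ring, and let G and Y be objects of the derived category D(R) of R-modules. Suppose Y admits a tower over G with shifts n_1, …, n_k. Then length_R(H^0(Y)) ≤ Σ_{i=1}^{k} length_R(H^{n_i}(G)) in ℕ∞, where H^{n_i}(G) = H^0(G[n_i]). -/

import Mathlib

open CategoryTheory Limits Pretriangulated

/-- The length of a module, defined as the Krull dimension of its lattice of submodules. -/
noncomputable def moduleLength (R M : Type*) [Ring R] [AddCommGroup M] [Module R M] : ℕ∞ :=
  WithBot.unbotD 0 (Order.krullDim (Submodule R M))

universe w u

variable {R : Type u} [CommRing R] [HasDerivedCategory.{w} (ModuleCat.{u} R)]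

/-- A tower of distinguished triangles over `G` reaching `Y` with shifts `n 0, …, n (k-1)`:
objects `0 ≅ E 0, E 1, …, E k ≅ Y` of the derived category together with distinguished
triangles `E i ⟶ E (i+1) ⟶ G⟦n i⟧ ⟶ (E i)⟦1⟧`. -/
def IsTower (G Y : DerivedCategory (ModuleCat.{u} R)) {k : ℕ} (n : Fin k → ℤ)
    (E : Fin (k + 1) → DerivedCategory (ModuleCat.{u} R)) : Prop :=
  IsZero (E 0) ∧ Nonempty (E (Fin.last k) ≅ Y) ∧
    ∀ i : Fin k, ∃ (f : E i.castSucc ⟶ E i.succ) (g : E i.succ ⟶ G⟦n i⟧)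
      (h : G⟦n i⟧ ⟶ (E i.castSucc)⟦(1 : ℤ)⟧),
      Triangle.mk f g h ∈ distTriang (DerivedCategory (ModuleCat.{u} R))

/-! Each triangle `E i ⟶ E (i+1) ⟶ G⟦n i⟧ ⟶` of the tower gives, in homology, an exact sequence
`H⁰(E i) → H⁰(E (i+1)) → H^{n i}(G)`, and the length of the middle term of such a sequence is at
most the sum of the outer lengths: it is an extension of a submodule of the third term by a
quotient of the first. Inducting along the tower from `E 0 = 0` gives the bound. -/

section Length

variable {R : Type*} [Ring R]

theorem moduleLength_eq_length (M : Type*) [AddCommGroup M] [Module R M] :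
    moduleLength R M = Module.length R M := by
  rw [moduleLength, ← Module.coe_length, WithBot.unbotD_coe]

theorem Module.length_le_add_of_exact {A B C : Type*} [AddCommGroup A] [Module R A]
    [AddCommGroup B] [Module R B] [AddCommGroup C] [Module R C]
    {f : A →ₗ[R] B} {g : B →ₗ[R] C} (hfg : Function.Exact f g) :
    Module.length R B ≤ Module.length R A + Module.length R C := by
  have hker : Function.Exact (LinearMap.ker g).subtype g.rangeRestrict := by
    rw [← LinearMap.ker_rangeRestrict]
    exact LinearMap.exact_subtype_ker_map g.rangeRestrict
  rw [Module.length_eq_add_of_exact _ _ (LinearMap.ker g).subtype_injective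
    g.surjective_rangeRestrict hker]
  gcongr
  · refine Module.length_le_of_surjective
      (f.codRestrict (LinearMap.ker g) fun a => hfg.apply_apply_eq_zero a) ?_
    rintro ⟨b, hb⟩
    obtain ⟨a, rfl⟩ := (hfg b).1 hb
    exact ⟨a, rfl⟩
  · exact Module.length_le_of_injective _ (LinearMap.range g).subtype_injective

theorem CategoryTheory.ShortComplex.Exact.moduleLength_X₂_le {S : ShortComplex (ModuleCat R)}
    (hS : S.Exact) :
    moduleLength R S.X₂ ≤ moduleLength R S.X₁ + moduleLength R S.X₃ := by
  simp only [moduleLength_eq_length]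
  exact Module.length_le_add_of_exact
    ((ShortComplex.ShortExact.moduleCat_exact_iff_function_exact S).1 hS)

theorem moduleLength_eq_of_iso {M N : ModuleCat R} (e : M ≅ N) :
    moduleLength R M = moduleLength R N := by
  simp only [moduleLength_eq_length, e.toLinearEquiv.length_eq]

theorem moduleLength_eq_zero_of_isZero {M : ModuleCat R} (hM : IsZero M) :
    moduleLength R M = 0 := by
  have : Subsingleton M := ModuleCat.subsingleton_of_isZero hM
  rw [moduleLength_eq_length, Module.length_eq_zero]

end Length

section Homology

variable {R : Type*} [Ring R] [HasDerivedCategory (ModuleCat R)]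

open DerivedCategory

theorem moduleLength_homology_obj₂_le (T : Triangle (DerivedCategory (ModuleCat R)))
    (hT : T ∈ distTriang _) (q : ℤ) :
    moduleLength R ((homologyFunctor (ModuleCat R) q).obj T.obj₂) ≤
      moduleLength R ((homologyFunctor (ModuleCat R) q).obj T.obj₁) +
        moduleLength R ((homologyFunctor (ModuleCat R) q).obj T.obj₃) :=
  (HomologySequence.exact₂ T hT q).moduleLength_X₂_le

theorem moduleLength_homology_shift (X : DerivedCategory (ModuleCat R)) {a q q' : ℤ}
    (h : a + q = q') :
    moduleLength R ((homologyFunctor (ModuleCat R) q).obj (X⟦a⟧)) =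
      moduleLength R ((homologyFunctor (ModuleCat R) q').obj X) :=
  moduleLength_eq_of_iso (((homologyFunctor (ModuleCat R) 0).shiftIso a q q' h).app X)

theorem moduleLength_homology_eq_zero_of_isZero {X : DerivedCategory (ModuleCat R)}
    (hX : IsZero X) (q : ℤ) : moduleLength R ((homologyFunctor (ModuleCat R) q).obj X) = 0 :=
  moduleLength_eq_zero_of_isZero ((homologyFunctor (ModuleCat R) q).map_isZero hX)

end Homology

theorem IsTower.castSucc {G Y : DerivedCategory (ModuleCat.{u} R)} {k : ℕ} {n : Fin (k + 1) → ℤ}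
    {E : Fin (k + 2) → DerivedCategory (ModuleCat.{u} R)} (hE : IsTower G Y n E) :
    IsTower G (E (Fin.last k).castSucc) (fun i => n i.castSucc) (fun i => E i.castSucc) :=
  ⟨hE.1, ⟨Iso.refl _⟩, fun i => hE.2.2 i.castSucc⟩

/-- If an object `Y` of the derived category `D(R)` admits a tower over
`G` with shifts `n 0, …, n (k-1)`, then
`length_R H⁰(Y) ≤ ∑ i, length_R H^{n i}(G)` in `ℕ∞`. -/
theorem length_H0_le_sum_of_tower (G Y : DerivedCategory (ModuleCat.{u} R))
    {k : ℕ} (n : Fin k → ℤ) (E : Fin (k + 1) → DerivedCategory (ModuleCat.{u} R))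
    (hE : IsTower G Y n E) :
    moduleLength R ((DerivedCategory.homologyFunctor (ModuleCat.{u} R) 0).obj Y) ≤
      ∑ i : Fin k,
        moduleLength R ((DerivedCategory.homologyFunctor (ModuleCat.{u} R) (n i)).obj G) := by
  open DerivedCategory in
  induction k generalizing Y with
  | zero =>
    obtain ⟨hE₀, ⟨eY⟩, -⟩ := hE
    rw [← moduleLength_eq_of_iso ((homologyFunctor (ModuleCat R) 0).mapIso eY),
      moduleLength_homology_eq_zero_of_isZero (X := E (Fin.last 0)) hE₀]
    exact zero_le
  | succ k ih =>
    obtain ⟨f, g, h, hT⟩ := hE.2.2 (Fin.last k)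
    obtain ⟨eY⟩ := hE.2.1
    calc moduleLength R ((homologyFunctor (ModuleCat R) 0).obj Y)
        = moduleLength R ((homologyFunctor (ModuleCat R) 0).obj (E (Fin.last (k + 1)))) :=
          (moduleLength_eq_of_iso ((homologyFunctor (ModuleCat R) 0).mapIso eY)).symm
      _ ≤ moduleLength R ((homologyFunctor (ModuleCat R) 0).obj (E (Fin.last k).castSucc)) +
            moduleLength R ((homologyFunctor (ModuleCat R) 0).obj (G⟦n (Fin.last k)⟧)) :=
          moduleLength_homology_obj₂_le _ hT 0
      _ ≤ ∑ i : Fin k, moduleLength R ((homologyFunctor (ModuleCat R) (n i.castSucc)).obj G) +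
            moduleLength R ((homologyFunctor (ModuleCat R) (n (Fin.last k))).obj G) :=
          add_le_add (ih _ _ _ hE.castSucc) (moduleLength_homology_shift G (add_zero _)).le
      _ = _ := by rw [Fin.sum_univ_castSucc]
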